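/- Let A be an associative ring and Δ_i the alternated product of i elements. For any positive integers k, ℓ, the unshuffle-composition Δ_k[Δ_{2ℓ+1}], i.e. Σ over (2ℓ+1, k−1)-unshuffles τ of sgn(τ)·Δ_k(Δ_{2ℓ+1}(a_{τ(1)},…,a_{τ(2ℓ+1)}), a_{τ(2ℓ+2)},…,a_{τ(2ℓ+k)}), equals k·Δ_{2ℓ+k}(a₁,…,a_{2ℓ+k}). -/

import Mathlib

/-- The fully alternated product of `n` elements of an associative ring. -/
def altProd {A : Type*} [Ring A] {n : ℕ} (a : Fin n → A) : A :=
  ∑ σ : Equiv.Perm (Fin n), (Equiv.Perm.sign σ : ℤ) • (List.ofFn (fun i => a (σ i))).prod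

/-- A permutation of `{0,…,n−1}` is an `(m, n−m)`-unshuffle when it is increasing
on the first `m` positions and on the remaining positions. -/
def IsUnshuffle {n : ℕ} (m : ℕ) (τ : Equiv.Perm (Fin n)) : Prop :=
  ∀ i j : Fin n, i < j → ((j : ℕ) < m ∨ m ≤ (i : ℕ)) → τ i < τ j

/-!
Expanding both alternated products, a term of the left side is indexed by an unshuffle `τ`, the
slot `p` that the inner bracket occupies among the `k` outer slots, a permutation `δ` of the other
outer slots and a permutation `ρ` inside the bracket. After flattening, the term is the word of `a`
read along `τ * blockPerm (ρ, δ) * blockRotation n p`, where the rotation moves the first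
`2ℓ + 1` letters to position `p`. As the block has odd length, the rotation has sign `(-1) ^ p`,
which is the sign of putting the bracket into slot `p`, so the signs match. For each `p`, every
permutation factors uniquely as an unshuffle times a block permutation, so each of the `k` slots
contributes `Δ_{2ℓ+k}(a)`.
-/

open Equiv Equiv.Perm Finset

namespace Fin

theorem coe_cycleRange_pow_of_le {N : ℕ} {j t : Fin N} (h : t ≤ j) (q : ℕ) :
    ((cycleRange j ^ q) t : ℕ) = ((t : ℕ) + q) % ((j : ℕ) + 1) := by
  induction q with
  | zero => simp [Nat.mod_eq_of_lt (Nat.lt_succ_of_le h)]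
  | succ q ih =>
    have hle : (cycleRange j ^ q) t ≤ j := by
      rw [le_def, ih]; exact Nat.le_of_lt_succ (Nat.mod_lt _ (Nat.succ_pos _))
    rw [pow_succ', mul_apply, coe_cycleRange_of_le hle, ← add_assoc, ← Nat.mod_add_mod, ← ih]
    split_ifs with hj
    · simp [hj]
    · have hlt : (cycleRange j ^ q) t < j := lt_of_le_of_ne hle hj
      exact (Nat.mod_eq_of_lt (Nat.succ_lt_succ hlt)).symm

theorem cycleRange_pow_of_gt {N : ℕ} {j t : Fin N} (h : j < t) (q : ℕ) :
    (cycleRange j ^ q) t = t :=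
  pow_apply_eq_self_of_apply_eq_self (cycleRange_of_gt h) q

end Fin

theorem List.ofFn_insertNth {α : Type*} {r : ℕ} (p : Fin (r + 1)) (z : α) (v : Fin r → α) :
    List.ofFn (Fin.insertNth p z v) = (List.ofFn v).take p ++ z :: (List.ofFn v).drop p := by
  refine List.ext_getElem (by simp; omega) fun t h₁ h₂ => ?_
  rw [List.getElem_ofFn]
  rcases lt_trichotomy t p with h | rfl | h
  · rw [Fin.insertNth_apply_below (by simpa [Fin.lt_def] using h),
      List.getElem_append_left (by simp; omega), eq_rec_constant]
    simp [Fin.castPred]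
  · rw [List.getElem_append_right (by simp)]
    simp [show (p : ℕ) - min (p : ℕ) r = 0 by omega]
  · rw [Fin.insertNth_apply_above (by simpa [Fin.lt_def] using h),
      List.getElem_append_right (by simp; omega)]
    simp only [eq_rec_constant, length_take, length_ofFn, getElem_cons, ↓reduceDIte,
      show t - min (p : ℕ) r ≠ 0 by omega, getElem_drop, List.getElem_ofFn]
    exact congrArg v (Fin.ext (by simp; omega))

theorem Equiv.Perm.eq_one_of_strictMono_comp {n : ℕ} {α : Type*} [Preorder α] {f : Fin n → α}
    {ρ : Perm (Fin n)} (hf : StrictMono f) (hfρ : StrictMono (f ∘ ρ)) : ρ = 1 :=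
  Equiv.ext <| congrFun (StrictMono.eq_id fun _ _ h => hf.lt_iff_lt.1 (hfρ h))

section BlockPerm

variable {m r : ℕ}

def blockPerm (m r : ℕ) : Perm (Fin m) × Perm (Fin r) →* Perm (Fin (m + r)) :=
  finSumFinEquiv.permCongrHom.toMonoidHom.comp (sumCongrHom _ _)

@[simp]
theorem blockPerm_apply_castAdd (q : Perm (Fin m) × Perm (Fin r)) (i : Fin m) :
    blockPerm m r q (Fin.castAdd r i) = Fin.castAdd r (q.1 i) := by
  simp [blockPerm, permCongr_apply]

@[simp]
theorem blockPerm_apply_natAdd (q : Perm (Fin m) × Perm (Fin r)) (j : Fin r) :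
    blockPerm m r q (Fin.natAdd m j) = Fin.natAdd m (q.2 j) := by
  simp [blockPerm, permCongr_apply]

theorem sign_blockPerm (q : Perm (Fin m) × Perm (Fin r)) :
    sign (blockPerm m r q) = sign q.1 * sign q.2 := by
  simp [blockPerm, sign_permCongr]

theorem mul_blockPerm_comp_castAdd (τ : Perm (Fin (m + r))) (q : Perm (Fin m) × Perm (Fin r)) :
    ⇑(τ * blockPerm m r q) ∘ Fin.castAdd r = (τ ∘ Fin.castAdd r) ∘ q.1 := by
  ext; simp

theorem mul_blockPerm_comp_natAdd (τ : Perm (Fin (m + r))) (q : Perm (Fin m) × Perm (Fin r)) :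
    ⇑(τ * blockPerm m r q) ∘ Fin.natAdd m = (τ ∘ Fin.natAdd m) ∘ q.2 := by
  ext; simp

end BlockPerm

section Unshuffle

variable {m r : ℕ}

theorem isUnshuffle_iff {τ : Perm (Fin (m + r))} :
    IsUnshuffle m τ ↔ StrictMono (τ ∘ Fin.castAdd r) ∧ StrictMono (τ ∘ Fin.natAdd m) := by
  refine ⟨fun h => ⟨fun i j hij => h _ _ (Fin.strictMono_castAdd r hij) (.inl (by simp)),
    fun i j hij => h _ _ (Fin.strictMono_natAdd m hij) (.inr (by simp))⟩, fun ⟨h₁, h₂⟩ => ?_⟩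
  intro i j hij hm
  induction i using Fin.addCases with
  | left i => induction j using Fin.addCases with
    | left j => exact h₁ ((Fin.strictMono_castAdd r).lt_iff_lt.1 hij)
    | right j =>
      simp only [Fin.val_natAdd, Fin.val_castAdd] at hm
      omega
  | right i => induction j using Fin.addCases with
    | left j =>
      rw [Fin.lt_def, Fin.val_natAdd, Fin.val_castAdd] at hij
      omega
    | right j => exact h₂ ((Fin.natAdd_lt_natAdd_iff m).1 hij)

theorem exists_isUnshuffle_mul_blockPerm (π : Perm (Fin (m + r))) :
    ∃ q, IsUnshuffle m (π * blockPerm m r q) := by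
  refine ⟨(Tuple.sort (π ∘ Fin.castAdd r), Tuple.sort (π ∘ Fin.natAdd m)),
    isUnshuffle_iff.2 ⟨?_, ?_⟩⟩
  · rw [mul_blockPerm_comp_castAdd]
    exact (Tuple.monotone_sort _).strictMono_of_injective
      ((π.injective.comp (Fin.castAdd_injective _ _)).comp (Equiv.injective _))
  · rw [mul_blockPerm_comp_natAdd]
    exact (Tuple.monotone_sort _).strictMono_of_injective
      ((π.injective.comp (Fin.natAdd_injective _ _)).comp (Equiv.injective _))

theorem eq_one_of_isUnshuffle_mul_blockPerm {τ : Perm (Fin (m + r))}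
    {q : Perm (Fin m) × Perm (Fin r)} (hτ : IsUnshuffle m τ)
    (hτq : IsUnshuffle m (τ * blockPerm m r q)) : q = 1 := by
  rw [isUnshuffle_iff, mul_blockPerm_comp_castAdd, mul_blockPerm_comp_natAdd] at hτq
  rw [isUnshuffle_iff] at hτ
  exact Prod.ext (eq_one_of_strictMono_comp hτ.1 hτq.1) (eq_one_of_strictMono_comp hτ.2 hτq.2)

theorem sum_isUnshuffle_mul_blockPerm {M : Type*} [AddCommMonoid M]
    [DecidablePred (IsUnshuffle (n := m + r) m)] (G : Perm (Fin (m + r)) → M) :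
    ∑ τ ∈ univ.filter (IsUnshuffle m), ∑ q, G (τ * blockPerm m r q) = ∑ π, G π := by
  rw [← sum_product']
  refine sum_bij (fun x _ => x.1 * blockPerm m r x.2) (fun _ _ => mem_univ _) ?_ ?_ fun _ _ => rfl
  · rintro ⟨τ₁, q₁⟩ h₁ ⟨τ₂, q₂⟩ h₂ (h : τ₁ * _ = τ₂ * _)
    simp only [mem_product, mem_filter, mem_univ, true_and, and_true] at h₁ h₂
    have hτ₂ : τ₂ = τ₁ * blockPerm m r (q₁ * q₂⁻¹) := by
      rw [map_mul, map_inv, ← mul_assoc, h, mul_inv_cancel_right]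
    have hq : q₁ = q₂ := by
      rw [← mul_inv_eq_one]
      exact eq_one_of_isUnshuffle_mul_blockPerm h₁ (hτ₂ ▸ h₂)
    subst hq
    rw [mul_right_cancel h]
  · intro π _
    obtain ⟨q, hq⟩ := exists_isUnshuffle_mul_blockPerm (r := r) π
    exact ⟨(π * blockPerm m r q, q⁻¹), by simpa using hq, by simp [mul_assoc]⟩

end Unshuffle

section BlockRotation

variable {n r : ℕ}

def blockRotation (n : ℕ) (p : Fin (r + 1)) : Perm (Fin (n + 1 + r)) :=
  Fin.cycleRange ⟨p + n, by omega⟩ ^ (n + 1)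

theorem coe_blockRotation (p : Fin (r + 1)) (t : Fin (n + 1 + r)) :
    (blockRotation n p t : ℕ) =
      if (t : ℕ) < p then t + (n + 1) else if (t : ℕ) ≤ p + n then t - p else t := by
  split_ifs with h₁ h₂
  · rw [blockRotation, Fin.coe_cycleRange_pow_of_le (Fin.le_def.2 (by simp; omega)),
      Nat.mod_eq_of_lt (by simp; omega)]
  · rw [blockRotation, Fin.coe_cycleRange_pow_of_le (Fin.le_def.2 h₂)]
    dsimp only
    rw [show (t : ℕ) + (n + 1) = t - p + (p + n + 1) by omega, Nat.add_mod_right,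
      Nat.mod_eq_of_lt (by omega)]
  · rw [blockRotation, Fin.cycleRange_pow_of_gt (Fin.lt_def.2 (by simp; omega))]

theorem sign_blockRotation (hn : Even n) (p : Fin (r + 1)) :
    sign (blockRotation n p) = (-1) ^ (p : ℕ) := by
  obtain ⟨k, rfl⟩ := hn
  rw [blockRotation, map_pow, Fin.sign_cycleRange, ← pow_mul,
    show ((p : ℕ) + (k + k)) * (k + k + 1) = p + 2 * (p * k + 2 * k * k + k) by ring,
    pow_add, pow_mul, neg_one_sq, one_pow, mul_one]

theorem ofFn_comp_blockRotation {α : Type*} (x : Fin (n + 1 + r) → α) (p : Fin (r + 1)) :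
    List.ofFn (x ∘ blockRotation n p) =
      (List.ofFn (x ∘ Fin.natAdd (n + 1))).take p ++ List.ofFn (x ∘ Fin.castAdd r) ++
        (List.ofFn (x ∘ Fin.natAdd (n + 1))).drop p := by
  have hmin : min (p : ℕ) r = p := by omega
  refine List.ext_getElem (by simp; omega) fun t h₁ h₂ => ?_
  simp only [List.getElem_ofFn, Function.comp_apply, List.getElem_append, List.getElem_take,
    List.getElem_drop, List.length_append, List.length_take, List.length_ofFn]
  split_ifs with h h'
  all_goals
    refine congrArg x (Fin.ext ?_)
    simp only [coe_blockRotation, Fin.val_natAdd, Fin.val_castAdd, hmin]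
    split_ifs <;> omega

end BlockRotation

section InsertPerm

variable {r : ℕ}

def insertPerm (p : Fin (r + 1)) (δ : Perm (Fin r)) : Perm (Fin (r + 1)) :=
  decomposeFin.symm (0, δ) * Fin.cycleRange p

@[simp]
theorem insertPerm_apply_self (p : Fin (r + 1)) (δ : Perm (Fin r)) : insertPerm p δ p = 0 := by
  simp [insertPerm]

@[simp]
theorem insertPerm_apply_succAbove (p : Fin (r + 1)) (δ : Perm (Fin r)) (j : Fin r) :
    insertPerm p δ (p.succAbove j) = (δ j).succ := by
  simp [insertPerm, decomposeFin_symm_apply_succ]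

theorem cons_comp_insertPerm {α : Type*} (p : Fin (r + 1)) (δ : Perm (Fin r)) (z : α)
    (v : Fin r → α) : Fin.cons z v ∘ insertPerm p δ = Fin.insertNth p z (v ∘ δ) :=
  Fin.eq_insertNth_iff.2 ⟨by simp, by ext j; simp [Fin.removeNth]⟩

theorem sign_insertPerm (p : Fin (r + 1)) (δ : Perm (Fin r)) :
    sign (insertPerm p δ) = (-1) ^ (p : ℕ) * sign δ := by
  simp [insertPerm, decomposeFin.symm_sign, mul_comm]

theorem insertPerm_injective :
    Function.Injective fun x : Fin (r + 1) × Perm (Fin r) => insertPerm x.1 x.2 := by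
  rintro ⟨p₁, δ₁⟩ ⟨p₂, δ₂⟩ (h : insertPerm p₁ δ₁ = insertPerm p₂ δ₂)
  obtain rfl : p₁ = p₂ := (insertPerm p₁ δ₁).injective <| by
    rw [insertPerm_apply_self, h, insertPerm_apply_self]
  have := decomposeFin.symm.injective (mul_right_cancel h)
  simp_all

theorem insertPerm_bijective :
    Function.Bijective fun x : Fin (r + 1) × Perm (Fin r) => insertPerm x.1 x.2 :=
  (Fintype.bijective_iff_injective_and_card _).2
    ⟨insertPerm_injective, by simp [Fintype.card_perm, Nat.factorial_succ]⟩

end InsertPerm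

theorem altProd_cons {A : Type*} [Ring A] {r : ℕ} (z : A) (v : Fin r → A) :
    altProd (Fin.cons z v : Fin (r + 1) → A) =
      ∑ p : Fin (r + 1), ∑ δ : Perm (Fin r),
        (((-1) ^ (p : ℕ) * sign δ : ℤˣ) : ℤ) • (List.ofFn (Fin.insertNth p z (v ∘ δ))).prod := by
  rw [altProd, ← insertPerm_bijective.sum_comp, Fintype.sum_prod_type]
  simp only [sign_insertPerm, ← cons_comp_insertPerm]
  rfl

theorem altProd_cons_altProd {A : Type*} [Ring A] {n r : ℕ} (hn : Even n)
    (x : Fin (n + 1 + r) → A) :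
    altProd (Fin.cons (altProd (x ∘ Fin.castAdd r)) (x ∘ Fin.natAdd (n + 1)) :
        Fin (r + 1) → A) =
      ∑ p, ∑ q, (sign (blockPerm (n + 1) r q * blockRotation n p) : ℤ) •
        (List.ofFn (x ∘ (blockPerm (n + 1) r q * blockRotation n p : Perm _))).prod := by
  rw [altProd_cons]
  refine sum_congr rfl fun p _ => ?_
  rw [Fintype.sum_prod_type, sum_comm]
  refine sum_congr rfl fun δ _ => ?_
  rw [List.ofFn_insertNth, List.prod_append, List.prod_cons, altProd, sum_mul, mul_sum, smul_sum]
  refine sum_congr rfl fun ρ _ => ?_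
  rw [Perm.coe_mul, ← Function.comp_assoc, ofFn_comp_blockRotation]
  simp only [Function.comp_def, blockPerm_apply_castAdd, blockPerm_apply_natAdd, List.prod_append,
    Perm.sign_mul, sign_blockPerm, sign_blockRotation hn, mul_smul_comm, smul_mul_assoc,
    smul_smul, mul_assoc]
  congr 1
  push_cast
  ring

theorem sum_isUnshuffle_smul_altProd_cons {A : Type*} [Ring A] {n r : ℕ} (hn : Even n)
    [DecidablePred (IsUnshuffle (n := n + 1 + r) (n + 1))] (a : Fin (n + 1 + r) → A) :
    ∑ τ ∈ univ.filter (IsUnshuffle (n + 1)), (sign τ : ℤ) •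
        altProd (Fin.cons (altProd fun i => a (τ (Fin.castAdd r i)))
          (fun j => a (τ (Fin.natAdd (n + 1) j))) : Fin (r + 1) → A) =
      (r + 1) • altProd a := by
  set f : Fin (r + 1) → Perm (Fin (n + 1 + r)) → A := fun p π =>
    (sign (π * blockRotation n p) : ℤ) • (List.ofFn (a ∘ ⇑(π * blockRotation n p))).prod
  have hf : ∀ p, ∑ π, f p π = altProd a := fun p =>
    Equiv.sum_comp (Equiv.mulRight (blockRotation n p)) fun π =>
      (sign π : ℤ) • (List.ofFn (a ∘ π)).prod
  calc _ = ∑ τ ∈ univ.filter (IsUnshuffle (n + 1)), ∑ p, ∑ q,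
        f p (τ * blockPerm (n + 1) r q) := by
        refine sum_congr rfl fun τ _ => (congrArg _ (altProd_cons_altProd hn (a ∘ τ))).trans ?_
        simp only [smul_sum, smul_smul, f]
        refine sum_congr rfl fun p _ => sum_congr rfl fun q _ => ?_
        rw [mul_assoc, Perm.sign_mul τ, Units.val_mul]
        rfl
    _ = ∑ p, ∑ τ ∈ univ.filter (IsUnshuffle (n + 1)), ∑ q, f p (τ * blockPerm (n + 1) r q) :=
        sum_comm
    _ = (r + 1) • altProd a := by simp [sum_isUnshuffle_mul_blockPerm, hf]

theorem sum_isUnshuffle_smul_altProd_cons_of_add_eq {A : Type*} [Ring A] {n r N : ℕ}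
    (hn : Even n) (hN : n + 1 + r = N) [DecidablePred (IsUnshuffle (n := N) (n + 1))]
    (a : Fin N → A) :
    ∑ τ ∈ univ.filter (IsUnshuffle (n + 1)), (sign τ : ℤ) •
        altProd (Fin.cons (altProd fun i : Fin (n + 1) => a (τ ⟨i, by omega⟩))
          (fun j : Fin r => a (τ ⟨n + 1 + j, by omega⟩)) : Fin (r + 1) → A) =
      (r + 1) • altProd a := by
  subst hN
  exact sum_isUnshuffle_smul_altProd_cons hn a

open Classical in
/-- `Δ_k[Δ_{2ℓ+1}] = k·Δ_{2ℓ+k}`: the unshuffle-composition of the alternated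
products, with the odd bracket `Δ_{2ℓ+1}` inserted into the first slot of `Δ_k`,
equals `k` times `Δ_{2ℓ+k}`. -/
theorem altProd_comp_odd {A : Type*} [Ring A]
    (k ℓ : ℕ) (hk : 0 < k) (a : Fin (2 * ℓ + k) → A) :
    ∑ τ ∈ Finset.univ.filter
        (fun τ : Equiv.Perm (Fin (2 * ℓ + k)) => IsUnshuffle (2 * ℓ + 1) τ),
      (Equiv.Perm.sign τ : ℤ) •
        altProd (fun j : Fin k =>
          if (j : ℕ) = 0 then
            altProd (fun i : Fin (2 * ℓ + 1) => a (τ ⟨(i : ℕ), by omega⟩))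
          else a (τ ⟨2 * ℓ + (j : ℕ), by omega⟩))
    = k • altProd a := by
  obtain ⟨r, rfl⟩ : ∃ r, k = r + 1 := ⟨k - 1, by omega⟩
  rw [← sum_isUnshuffle_smul_altProd_cons_of_add_eq (even_two_mul ℓ)
    (show 2 * ℓ + 1 + r = 2 * ℓ + (r + 1) by omega) a]
  refine sum_congr rfl fun τ _ => congrArg _ (congrArg altProd (funext fun j => ?_))
  cases j using Fin.cases with
  | zero => rfl
  | succ j => simp [show 2 * ℓ + ((j : ℕ) + 1) = 2 * ℓ + 1 + j by omega]
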